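/- Let φ be an upper invariant, lower invariant, ordinally efficient, and symmetric mechanism on 4 agents and objects {a,b,c,d}. At the profile where agents 1,2 report a ≻ b ≻ c ≻ d, agent 3 reports b ≻ a ≻ c ≻ d, and agent 4 reports a ≻ d ≻ b ≻ c, the assignment is: agents 1,2 each get (1/3, 5/24, 1/3, 1/8) for (a,b,c,d), agent 3 gets (0, 7/12, 1/3, 1/12), and agent 4 gets (1/3, 0, 0, 2/3). -/
import Mathlib


open Finset

/-- A strict preference order over `n` objects, encoded as a rank function:
`P j < P j'` means object `j` is strictly preferred to object `j'`. -/
abbrev Pref (n : ℕ) := Fin n ≃ Fin n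

/-- A (random) assignment: rows are agents, columns are objects. -/
abbrev Assignment (n : ℕ) := Fin n → Fin n → ℝ

/-- Bi-stochastic matrix: nonnegative entries, all rows and columns sum to 1. -/
def BiStochastic {n : ℕ} (x : Assignment n) : Prop :=
  (∀ i j, 0 ≤ x i j) ∧ (∀ i, ∑ j, x i j = 1) ∧ (∀ j, ∑ i, x i j = 1)

/-- A mechanism maps preference profiles to assignments. -/
abbrev Mechanism (n : ℕ) := (Fin n → Pref n) → Assignment n

/-- A mechanism always outputs bi-stochastic matrices. -/
def ValidMech {n : ℕ} (φ : Mechanism n) : Prop := ∀ P, BiStochastic (φ P)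

/-- `P'` arises from `P` by swapping the consecutively ranked objects `j ≻ j'`. -/
def AdjSwap {n : ℕ} (P P' : Pref n) (j j' : Fin n) : Prop :=
  (P j' : ℕ) = (P j : ℕ) + 1 ∧ P' = (Equiv.swap j j').trans P

/-- Upper invariance: a swap of consecutive `j ≻ j'` leaves the swapping agent's
probabilities for objects strictly preferred to `j` unchanged. -/
def UpperInvariant {n : ℕ} (φ : Mechanism n) : Prop :=
  ∀ (P : Fin n → Pref n) (i j j' : Fin n) (P' : Pref n),
    AdjSwap (P i) P' j j' →
    ∀ k, P i k < P i j → φ (Function.update P i P') i k = φ P i k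

/-- Lower invariance: a swap of consecutive `j ≻ j'` leaves the swapping agent's
probabilities for objects ranked strictly below `j'` unchanged. -/
def LowerInvariant {n : ℕ} (φ : Mechanism n) : Prop :=
  ∀ (P : Fin n → Pref n) (i j j' : Fin n) (P' : Pref n),
    AdjSwap (P i) P' j j' →
    ∀ k, P i j' < P i k → φ (Function.update P i P') i k = φ P i k

/-- Swap monotonicity: after a swap of consecutive `j ≻ j'`, either the agent's
assignment vector is unchanged, or her probability for `j` strictly decreases and
her probability for `j'` strictly increases. -/
def SwapMonotonic {n : ℕ} (φ : Mechanism n) : Prop :=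
  ∀ (P : Fin n → Pref n) (i j j' : Fin n) (P' : Pref n),
    AdjSwap (P i) P' j j' →
    φ (Function.update P i P') i = φ P i ∨
      (φ (Function.update P i P') i j < φ P i j ∧
       φ P i j' < φ (Function.update P i P') i j')

/-- `y` first order-stochastically dominates `x` at preference order `P`. -/
def FOSD {n : ℕ} (P : Pref n) (y x : Fin n → ℝ) : Prop :=
  ∀ j, ∑ k ∈ univ.filter (fun k => P k ≤ P j), x k ≤
       ∑ k ∈ univ.filter (fun k => P k ≤ P j), y k

/-- `y` strictly ordinally dominates `x` at profile `P`. -/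
def StrictDom {n : ℕ} (P : Fin n → Pref n) (y x : Assignment n) : Prop :=
  (∀ i, FOSD (P i) (y i) (x i)) ∧
  ∃ i j, ∑ k ∈ univ.filter (fun k => P i k ≤ P i j), x i k <
         ∑ k ∈ univ.filter (fun k => P i k ≤ P i j), y i k

/-- `x` is ordinally efficient at profile `P`. -/
def OrdEffAt {n : ℕ} (P : Fin n → Pref n) (x : Assignment n) : Prop :=
  ¬ ∃ y, BiStochastic y ∧ StrictDom P y x

/-- An ordinally efficient mechanism. -/
def OrdEff {n : ℕ} (φ : Mechanism n) : Prop := ∀ P, OrdEffAt P (φ P)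

/-- Symmetry (equal treatment of equals). -/
def SymmetricMech {n : ℕ} (φ : Mechanism n) : Prop :=
  ∀ P (i i' : Fin n), P i = P i' → φ P i = φ P i'

/-- Anonymity: exchanging two agents' reports exchanges their assignment vectors. -/
def Anonymous {n : ℕ} (φ : Mechanism n) : Prop :=
  ∀ P (i i' : Fin n), φ P i = φ (fun k => P (Equiv.swap i i' k)) i'

/-- Neutrality: relabeling objects via `π` relabels the assignment columns. -/
def Neutral {n : ℕ} (φ : Mechanism n) : Prop :=
  ∀ P (π : Equiv.Perm (Fin n)) (i j : Fin n),
    φ (fun k => π.symm.trans (P k)) i (π j) = φ P i j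

/-- Non-bossiness. -/
def NonBossy {n : ℕ} (φ : Mechanism n) : Prop :=
  ∀ (P : Fin n → Pref n) (i : Fin n) (P' : Pref n),
    φ (Function.update P i P') i = φ P i →
    φ (Function.update P i P') = φ P

/-- Objects: `a = 0`, `b = 1`, `c = 2`, `d = 3`. Preference orders as rank functions. -/
noncomputable def pABCD : Pref 4 := Equiv.ofBijective ![0, 1, 2, 3] (by decide)
noncomputable def pABDC : Pref 4 := Equiv.ofBijective ![0, 1, 3, 2] (by decide)
noncomputable def pADBC : Pref 4 := Equiv.ofBijective ![0, 2, 3, 1] (by decide)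
noncomputable def pBACD : Pref 4 := Equiv.ofBijective ![1, 0, 2, 3] (by decide)
noncomputable def pBADC : Pref 4 := Equiv.ofBijective ![1, 0, 3, 2] (by decide)
noncomputable def pBDCA : Pref 4 := Equiv.ofBijective ![3, 0, 2, 1] (by decide)
noncomputable def pDBCA : Pref 4 := Equiv.ofBijective ![3, 1, 2, 0] (by decide)


section Aux

open Finset

lemma trade_aux {P : Fin 4 → Pref 4} {x : Assignment 4}
    (hx : BiStochastic x) (hoe : OrdEffAt P x)
    (i i' j j' : Fin 4)
    (h1 : P i j < P i j') (h2 : P i' j' < P i' j) :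
    x i j' = 0 ∨ x i' j = 0 := by
  have hii : i ≠ i' := by rintro rfl; exact absurd h2 (asymm h1)
  have hii' : i' ≠ i := hii.symm
  have hjj : j ≠ j' := by rintro rfl; exact lt_irrefl _ h1
  have hjj' : j' ≠ j := hjj.symm
  by_contra hcon
  push_neg at hcon
  obtain ⟨hA, hB⟩ := hcon
  obtain ⟨hnn, hrow, hcol⟩ := hx
  have hA' : 0 < x i j' := lt_of_le_of_ne (hnn i j') (Ne.symm hA)
  have hB' : 0 < x i' j := lt_of_le_of_ne (hnn i' j) (Ne.symm hB)
  set ε := min (x i j') (x i' j) with hε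
  have hεpos : 0 < ε := lt_min hA' hB'
  have hε1 : ε ≤ x i j' := min_le_left _ _
  have hε2 : ε ≤ x i' j := min_le_right _ _
  set d : Fin 4 → Fin 4 → ℝ := fun m k =>
    (if m = i ∧ k = j then ε else 0) - (if m = i ∧ k = j' then ε else 0)
    + (if m = i' ∧ k = j' then ε else 0) - (if m = i' ∧ k = j then ε else 0) with hd
  have piece : ∀ (s : Finset (Fin 4)) (c : Fin 4) (t : Prop) (_ : Decidable t),
      ∑ k ∈ s, (if t ∧ k = c then ε else 0) = if t ∧ c ∈ s then ε else 0 := by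
    intro s c t ht
    by_cases h : t
    · simp only [h, true_and]
      exact Finset.sum_ite_eq' s c fun _ => ε
    · simp [h]
  have key : ∀ (s : Finset (Fin 4)) (m : Fin 4), ∑ k ∈ s, d m k =
      (if m = i ∧ j ∈ s then ε else 0) - (if m = i ∧ j' ∈ s then ε else 0)
      + (if m = i' ∧ j' ∈ s then ε else 0) - (if m = i' ∧ j ∈ s then ε else 0) := by
    intro s m
    simp only [hd]
    rw [Finset.sum_sub_distrib, Finset.sum_add_distrib, Finset.sum_sub_distrib,
      piece s j (m = i) _, piece s j' (m = i) _, piece s j' (m = i') _, piece s j (m = i') _]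
  have piece' : ∀ (c : Fin 4) (t : Prop) (_ : Decidable t),
      ∑ m : Fin 4, (if m = c ∧ t then ε else 0) = if t then ε else 0 := by
    intro c t ht
    by_cases h : t
    · simp only [h, and_true]
      rw [Finset.sum_ite_eq' univ c fun _ => ε]
      simp
    · simp [h]
  have keycol : ∀ (k : Fin 4), ∑ m : Fin 4, d m k = 0 := by
    intro k
    simp only [hd]
    rw [Finset.sum_sub_distrib, Finset.sum_add_distrib, Finset.sum_sub_distrib,
      piece' i (k = j) _, piece' i (k = j') _, piece' i' (k = j') _, piece' i' (k = j) _]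
    split_ifs <;> ring
  apply hoe
  refine ⟨fun m k => x m k + d m k, ⟨?_, ?_, ?_⟩, ?_, ?_⟩
  · intro m k
    have h0 := hnn m k
    simp only [hd]
    split_ifs <;>
      first
        | linarith
        | (obtain ⟨rfl, rfl⟩ := ‹_ ∧ _›; first | linarith | simp_all)
  · intro m
    rw [Finset.sum_add_distrib, hrow m, key univ m]
    simp only [Finset.mem_univ, and_true]
    split_ifs <;> ring
  · intro k
    rw [Finset.sum_add_distrib, hcol k, keycol k]
    ring
  · intro m t
    rw [Finset.sum_add_distrib]
    set S := univ.filter (fun k => P m k ≤ P m t) with hS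
    have hk := key S m
    have hge : 0 ≤ ∑ k ∈ S, d m k := by
      rw [hk]
      by_cases hmi : m = i
      · have hmi' : m ≠ i' := by rw [hmi]; exact hii
        have himp : j' ∈ S → j ∈ S := by
          intro h
          simp only [hS, Finset.mem_filter, Finset.mem_univ, true_and, hmi] at h ⊢
          exact le_trans h1.le h
        by_cases hj' : j' ∈ S
        · have hj := himp hj'
          simp [hmi, hmi', hj, hj', hii]
        · simp only [hmi', false_and, if_false, hj', and_false]
          split_ifs <;> linarith
      · by_cases hmi' : m = i'
        · have himp : j ∈ S → j' ∈ S := by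
            intro h
            simp only [hS, Finset.mem_filter, Finset.mem_univ, true_and, hmi'] at h ⊢
            exact le_trans h2.le h
          by_cases hj : j ∈ S
          · have hj' := himp hj
            simp [hmi, hmi', hj, hj', hii']
          · simp only [hmi, false_and, if_false, hj, and_false]
            split_ifs <;> linarith
        · simp [hmi, hmi']
    linarith
  · refine ⟨i, j, ?_⟩
    rw [Finset.sum_add_distrib]
    set S := univ.filter (fun k => P i k ≤ P i j) with hS
    have hk := key S i
    have hj : j ∈ S := by simp [hS]
    have hj' : j' ∉ S := by
      simp only [hS, Finset.mem_filter, Finset.mem_univ, true_and]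
      exact not_le.2 h1
    have hpos : 0 < ∑ k ∈ S, d i k := by
      rw [hk]
      simp [hii, hj, hj', hεpos]
    linarith

noncomputable def Q1 : Fin 4 → Pref 4 := fun _ => pABCD
noncomputable def Q2 : Fin 4 → Pref 4 := fun k => if k = 3 then pABDC else pABCD
noncomputable def QII : Fin 4 → Pref 4 := fun k => if k = 3 then pADBC else pABCD
noncomputable def Q3 : Fin 4 → Pref 4 := fun k => if k = 2 then pBACD else pABCD
noncomputable def Q4 : Fin 4 → Pref 4 :=
  fun k => if k = 2 then pBACD else if k = 3 then pABDC else pABCD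
noncomputable def Q7 : Fin 4 → Pref 4 :=
  fun k => if k = 2 then pBACD else if k = 3 then pADBC else pABCD

lemma swapCD : AdjSwap pABCD pABDC 2 3 := ⟨by decide, Equiv.ext (by decide)⟩
lemma swapBD : AdjSwap pABDC pADBC 1 3 := ⟨by decide, Equiv.ext (by decide)⟩
lemma swapAB : AdjSwap pABCD pBACD 0 1 := ⟨by decide, Equiv.ext (by decide)⟩

lemma U1 : Function.update Q1 3 pABDC = Q2 := by
  funext k; fin_cases k <;> rfl
lemma U2 : Function.update Q2 3 pADBC = QII := by
  funext k; fin_cases k <;> rfl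
lemma U3 : Function.update Q1 2 pBACD = Q3 := by
  funext k; fin_cases k <;> rfl
lemma U4a : Function.update Q2 2 pBACD = Q4 := by
  funext k; fin_cases k <;> rfl
lemma U4b : Function.update Q3 3 pABDC = Q4 := by
  funext k; fin_cases k <;> rfl
lemma U7a : Function.update QII 2 pBACD = Q7 := by
  funext k; fin_cases k <;> rfl
lemma U7b : Function.update Q4 3 pADBC = Q7 := by
  funext k; fin_cases k <;> rfl

end Aux
theorem profile_VII (φ : Mechanism 4)
    (hV : ValidMech φ) (hUI : UpperInvariant φ) (hLI : LowerInvariant φ)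
    (hOE : OrdEff φ) (hS : SymmetricMech φ) :
    ∀ i : Fin 4,
      φ (fun k => if k = 2 then pBACD else if k = 3 then pADBC else pABCD) i =
        if i = 2 then ![0, 7 / 12, 1 / 3, 1 / 12]
        else if i = 3 then ![1 / 3, 0, 0, 2 / 3]
        else ![1 / 3, 5 / 24, 1 / 3, 1 / 8] := by
  classical
  -- column and row sum helpers
  have col : ∀ (P : Fin 4 → Pref 4) (j : Fin 4),
      φ P 0 j + φ P 1 j + φ P 2 j + φ P 3 j = 1 := by
    intro P j
    have h := (hV P).2.2 j
    rwa [Fin.sum_univ_four] at h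
  have row : ∀ (P : Fin 4 → Pref 4) (i : Fin 4),
      φ P i 0 + φ P i 1 + φ P i 2 + φ P i 3 = 1 := by
    intro P i
    have h := (hV P).2.1 i
    rwa [Fin.sum_univ_four] at h
  have nn : ∀ (P : Fin 4 → Pref 4) (i j : Fin 4), 0 ≤ φ P i j := fun P => (hV P).1
  -- ===== Profile Q1 : everyone ABCD =====
  have hq1 : ∀ i, φ Q1 i = φ Q1 0 := fun i => hS Q1 i 0 rfl
  have e1 : ∀ j, φ Q1 0 j = 1/4 := by
    intro j
    have hc := col Q1 j
    rw [hq1 1, hq1 2, hq1 3] at hc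
    linarith
  -- ===== Profile Q2 = (ABCD, ABCD, ABCD, ABDC) =====
  have hu1 : ∀ k, pABCD k < pABCD 2 → φ Q2 3 k = φ Q1 3 k := by
    intro k hk
    have h := hUI Q1 3 2 3 pABDC swapCD k hk
    rwa [U1] at h
  have e2a : φ Q2 3 0 = 1/4 := by
    rw [hu1 0 (by decide), hq1 3, e1 0]
  have e2b : φ Q2 3 1 = 1/4 := by
    rw [hu1 1 (by decide), hq1 3, e1 1]
  have hq2 : ∀ i, i = 1 ∨ i = 2 → φ Q2 i = φ Q2 0 := by
    rintro i (rfl | rfl)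
    · exact hS Q2 1 0 rfl
    · exact hS Q2 2 0 rfl
  have e2c : φ Q2 3 2 = 0 := by
    by_contra h
    have t0 := (trade_aux (hV Q2) (hOE Q2) 3 0 3 2 (by decide) (by decide)).resolve_left h
    have t1 := (trade_aux (hV Q2) (hOE Q2) 3 1 3 2 (by decide) (by decide)).resolve_left h
    have t2 := (trade_aux (hV Q2) (hOE Q2) 3 2 3 2 (by decide) (by decide)).resolve_left h
    have hc := col Q2 3
    have hr := row Q2 3
    have := nn Q2 3 2
    rw [t0, t1, t2] at hc
    rw [e2a, e2b] at hr
    linarith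
  have e2d : φ Q2 3 3 = 1/2 := by
    have hr := row Q2 3
    rw [e2a, e2b, e2c] at hr
    linarith
  have e2r : ∀ j v, φ Q2 3 j = v → φ Q2 0 j = (1 - v) / 3 := by
    intro j v hv
    have hc := col Q2 j
    rw [hq2 1 (Or.inl rfl), hq2 2 (Or.inr rfl), hv] at hc
    linarith
  have e2c2 : φ Q2 0 2 = 1/3 := by
    have := e2r 2 0 e2c; linarith
  have e2d2 : φ Q2 0 3 = 1/6 := by
    have := e2r 3 (1/2) e2d; linarith
  -- ===== Profile QII = (ABCD, ABCD, ABCD, ADBC) =====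
  have hu2 : φ QII 3 0 = 1/4 := by
    have h := hUI Q2 3 1 3 pADBC swapBD 0 (by decide)
    rw [U2] at h
    rw [h, e2a]
  have hl2 : φ QII 3 2 = 0 := by
    have h := hLI Q2 3 1 3 pADBC swapBD 2 (by decide)
    rw [U2] at h
    rw [h, e2c]
  have hqII : ∀ i, i = 1 ∨ i = 2 → φ QII i = φ QII 0 := by
    rintro i (rfl | rfl)
    · exact hS QII 1 0 rfl
    · exact hS QII 2 0 rfl
  have eIIb : φ QII 3 1 = 0 := by
    by_contra h
    have t0 := (trade_aux (hV QII) (hOE QII) 3 0 3 1 (by decide) (by decide)).resolve_left h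
    have t1 := (trade_aux (hV QII) (hOE QII) 3 1 3 1 (by decide) (by decide)).resolve_left h
    have t2 := (trade_aux (hV QII) (hOE QII) 3 2 3 1 (by decide) (by decide)).resolve_left h
    have hc := col QII 3
    have hr := row QII 3
    have := nn QII 3 1
    rw [t0, t1, t2] at hc
    rw [hu2, hl2] at hr
    linarith
  have eIId : φ QII 3 3 = 3/4 := by
    have hr := row QII 3
    rw [hu2, eIIb, hl2] at hr
    linarith
  have eIIr : ∀ j v, φ QII 3 j = v → φ QII 0 j = (1 - v) / 3 := by
    intro j v hv
    have hc := col QII j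
    rw [hqII 1 (Or.inl rfl), hqII 2 (Or.inr rfl), hv] at hc
    linarith
  have eII2 : φ QII 0 2 = 1/3 := by
    have := eIIr 2 0 hl2; linarith
  have eII3 : φ QII 0 3 = 1/12 := by
    have := eIIr 3 (3/4) eIId; linarith
  -- ===== Profile Q3 = (ABCD, ABCD, BACD, ABCD) =====
  have hl3 : ∀ k, pABCD 1 < pABCD k → φ Q3 2 k = φ Q1 2 k := by
    intro k hk
    have h := hLI Q1 2 0 1 pBACD swapAB k hk
    rwa [U3] at h
  have e3c : φ Q3 2 2 = 1/4 := by
    rw [hl3 2 (by decide), hq1 2, e1 2]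
  have e3d : φ Q3 2 3 = 1/4 := by
    rw [hl3 3 (by decide), hq1 2, e1 3]
  have hq3 : ∀ i, i = 1 ∨ i = 3 → φ Q3 i = φ Q3 0 := by
    rintro i (rfl | rfl)
    · exact hS Q3 1 0 rfl
    · exact hS Q3 3 0 rfl
  have e3a : φ Q3 2 0 = 0 := by
    by_contra h
    have t0 := (trade_aux (hV Q3) (hOE Q3) 2 0 1 0 (by decide) (by decide)).resolve_left h
    have t1 := (trade_aux (hV Q3) (hOE Q3) 2 1 1 0 (by decide) (by decide)).resolve_left h
    have t3 := (trade_aux (hV Q3) (hOE Q3) 2 3 1 0 (by decide) (by decide)).resolve_left h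
    have hc := col Q3 1
    have hr := row Q3 2
    have := nn Q3 2 0
    rw [t0, t1, t3] at hc
    rw [e3c, e3d] at hr
    linarith
  have e3b : φ Q3 2 1 = 1/2 := by
    have hr := row Q3 2
    rw [e3a, e3c, e3d] at hr
    linarith
  have e3r0 : φ Q3 0 0 = 1/3 := by
    have hc := col Q3 0
    rw [hq3 1 (Or.inl rfl), hq3 3 (Or.inr rfl), e3a] at hc
    linarith
  have e330 : φ Q3 3 0 = 1/3 := by
    rw [hq3 3 (Or.inr rfl), e3r0]
  -- ===== Profile Q4 = (ABCD, ABCD, BACD, ABDC) =====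
  have e4_22 : φ Q4 2 2 = 1/3 := by
    have h := hLI Q2 2 0 1 pBACD swapAB 2 (by decide)
    rw [U4a] at h
    rw [h, hq2 2 (Or.inr rfl), e2c2]
  have e4_23 : φ Q4 2 3 = 1/6 := by
    have h := hLI Q2 2 0 1 pBACD swapAB 3 (by decide)
    rw [U4a] at h
    rw [h, hq2 2 (Or.inr rfl), e2d2]
  have e4_30 : φ Q4 3 0 = 1/3 := by
    have h := hUI Q3 3 2 3 pABDC swapCD 0 (by decide)
    rw [U4b] at h
    rw [h, e330]
  have e4_32 : φ Q4 3 2 = 0 := by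
    have t := trade_aux (hV Q4) (hOE Q4) 3 2 3 2 (by decide) (by decide)
    rcases t with h | h
    · exact h
    · rw [e4_23] at h; norm_num at h
  -- ===== Profile Q7 = (ABCD, ABCD, BACD, ADBC) =====
  have e7_22 : φ Q7 2 2 = 1/3 := by
    have h := hLI QII 2 0 1 pBACD swapAB 2 (by decide)
    rw [U7a] at h
    rw [h, hqII 2 (Or.inr rfl), eII2]
  have e7_23 : φ Q7 2 3 = 1/12 := by
    have h := hLI QII 2 0 1 pBACD swapAB 3 (by decide)
    rw [U7a] at h
    rw [h, hqII 2 (Or.inr rfl), eII3]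
  have e7_30 : φ Q7 3 0 = 1/3 := by
    have h := hUI Q4 3 1 3 pADBC swapBD 0 (by decide)
    rw [U7b] at h
    rw [h, e4_30]
  have e7_32 : φ Q7 3 2 = 0 := by
    have h := hLI Q4 3 1 3 pADBC swapBD 2 (by decide)
    rw [U7b] at h
    rw [h, e4_32]
  have e7_31 : φ Q7 3 1 = 0 := by
    have t := trade_aux (hV Q7) (hOE Q7) 3 2 3 1 (by decide) (by decide)
    rcases t with h | h
    · exact h
    · rw [e7_23] at h; norm_num at h
  have e7_33 : φ Q7 3 3 = 2/3 := by
    have hr := row Q7 3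
    rw [e7_30, e7_31, e7_32] at hr
    linarith
  have h701 : φ Q7 1 = φ Q7 0 := hS Q7 1 0 rfl
  have e7_20 : φ Q7 2 0 = 0 := by
    by_contra h
    have t0 := (trade_aux (hV Q7) (hOE Q7) 2 0 1 0 (by decide) (by decide)).resolve_left h
    have t1 := (trade_aux (hV Q7) (hOE Q7) 2 1 1 0 (by decide) (by decide)).resolve_left h
    have hc := col Q7 1
    have hr := row Q7 2
    have := nn Q7 2 0
    rw [t0, t1, e7_31] at hc
    rw [e7_22, e7_23] at hr
    linarith
  have e7_21 : φ Q7 2 1 = 7/12 := by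
    have hr := row Q7 2
    rw [e7_20, e7_22, e7_23] at hr
    linarith
  have e7_00 : φ Q7 0 0 = 1/3 := by
    have hc := col Q7 0
    rw [h701, e7_20, e7_30] at hc
    linarith
  have e7_01 : φ Q7 0 1 = 5/24 := by
    have hc := col Q7 1
    rw [h701, e7_21, e7_31] at hc
    linarith
  have e7_02 : φ Q7 0 2 = 1/3 := by
    have hc := col Q7 2
    rw [h701, e7_22, e7_32] at hc
    linarith
  have e7_03 : φ Q7 0 3 = 1/8 := by
    have hc := col Q7 3
    rw [h701, e7_23, e7_33] at hc
    linarith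
  -- ===== assemble =====
  have main : ∀ i : Fin 4,
      φ Q7 i =
        if i = 2 then ![0, 7 / 12, 1 / 3, 1 / 12]
        else if i = 3 then ![1 / 3, 0, 0, 2 / 3]
        else ![1 / 3, 5 / 24, 1 / 3, 1 / 8] := by
    intro i
    fin_cases i
    · funext j
      fin_cases j <;>
        simp [e7_00, e7_01, e7_02, e7_03]
    · have f0 : φ Q7 1 0 = 1/3 := (congrFun h701 0).trans e7_00
      have f1 : φ Q7 1 1 = 5/24 := (congrFun h701 1).trans e7_01
      have f2 : φ Q7 1 2 = 1/3 := (congrFun h701 2).trans e7_02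
      have f3 : φ Q7 1 3 = 1/8 := (congrFun h701 3).trans e7_03
      funext j
      fin_cases j <;>
        simp [f0, f1, f2, f3]
    · funext j
      fin_cases j <;>
        simp [e7_20, e7_21, e7_22, e7_23]
    · funext j
      fin_cases j <;>
        simp [e7_30, e7_31, e7_32, e7_33]
  exact main
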